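/- Let {τᵢ} be the arrival times of a homogeneous Poisson process on (0,∞) with rate μ, let 0 < α < 1, and let {Qᵢ} be i.i.d. nonnegative random variables independent of the process with E[Qᵢ^α] < ∞. Then the series A = Σᵢ Qᵢ τᵢ^{-1/α} converges almost surely. -/

import Mathlib

/-!
The strong law, applied to the integrable truncations `min gapᵢ 1` (whose mean is positive),
gives `τᵢ ≥ c (i + 1)` for some `c > 0` and all large `i`, almost surely. So it suffices that
`∑ Qᵢ (i + 1)^(-1/α)` converges a.s., and for this no independence is needed: for `w ≥ 0`,
`∑ᵢ min (w (i + 1)^(-1/α)) 1 ≤ (1 + w^α) / (1 - α)` (at most `⌈w^α⌉` terms are bounded by `1`,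
the rest by a tail of the `p`-series with `p = 1/α > 1`). Hence `∑ᵢ min (Qᵢ (i + 1)^(-1/α)) 1`
has finite expectation when `E[Q^α] < ∞`, so it is a.s. finite, and then its terms are eventually
`Qᵢ (i + 1)^(-1/α)` themselves.
-/

open MeasureTheory ProbabilityTheory Finset Filter Real

lemma sum_Ico_add_one_rpow_neg_le {r : ℝ} (hr : 1 < r) {M : ℕ} (hM : 1 ≤ M) (n : ℕ) :
    ∑ i ∈ Ico M n, ((i : ℝ) + 1) ^ (-r) ≤ (M : ℝ) ^ (1 - r) / (r - 1) := by
  have hM0 : (0 : ℝ) < M := by exact_mod_cast hM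
  rcases lt_or_ge n M with hn | hn
  · rw [Ico_eq_empty_of_le hn.le, sum_empty]
    exact div_nonneg (by positivity) (by linarith)
  have hanti : AntitoneOn (fun x : ℝ => x ^ (-r)) (Set.Icc (M : ℝ) n) := fun x hx y _ hxy =>
    rpow_le_rpow_of_nonpos (hM0.trans_le hx.1) hxy (by linarith)
  have h0 : (0 : ℝ) ∉ Set.uIcc (M : ℝ) n := by
    rw [Set.uIcc_of_le (by exact_mod_cast hn)]
    exact fun h => hM0.not_ge h.1
  calc ∑ i ∈ Ico M n, ((i : ℝ) + 1) ^ (-r)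
      ≤ ∫ x in (M : ℝ)..n, x ^ (-r) := by
        simpa only [Nat.cast_add_one] using hanti.sum_le_integral_Ico hn
    _ = ((M : ℝ) ^ (1 - r) - (n : ℝ) ^ (1 - r)) / (r - 1) := by
        rw [integral_rpow (Or.inr ⟨by linarith, h0⟩), show -r + 1 = 1 - r by ring,
          ← neg_div_neg_eq, neg_sub, neg_sub]
    _ ≤ (M : ℝ) ^ (1 - r) / (r - 1) := by
        gcongr
        exact sub_le_self _ (by positivity)

lemma sum_range_min_mul_add_one_rpow_neg_le {α : ℝ} (hα0 : 0 < α) (hα1 : α < 1) {w : ℝ}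
    (hw : 0 ≤ w) (n : ℕ) :
    ∑ i ∈ range n, min (w * ((i : ℝ) + 1) ^ (-(1 / α))) 1 ≤ (1 + w ^ α) / (1 - α) := by
  set r := 1 / α with hr_def
  have hr : 1 < r := by rw [hr_def, lt_div_iff₀ hα0]; linarith
  set t := w ^ α
  have ht : 0 ≤ t := rpow_nonneg hw α
  set M := max ⌈t⌉₊ 1
  have hM1 : 1 ≤ M := le_max_right _ _
  have hM0 : (0 : ℝ) < M := by exact_mod_cast hM1
  have htM : t ≤ M := (Nat.le_ceil t).trans (by exact_mod_cast le_max_left _ _)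
  have hMt : (M : ℝ) ≤ t + 1 := by
    rw [Nat.cast_max, Nat.cast_one]
    exact max_le (Nat.ceil_lt_add_one ht).le (by linarith)
  have hw_eq : w = t ^ r := by rw [← rpow_mul hw, hr_def, mul_one_div_cancel hα0.ne', rpow_one]
  have hwM : w * (M : ℝ) ^ (1 - r) ≤ t := calc
    w * (M : ℝ) ^ (1 - r) = t * (t ^ (r - 1) * (M : ℝ) ^ (1 - r)) := by
        rw [hw_eq, ← mul_assoc, ← rpow_one_add' ht (by linarith)]; ring_nf
    _ ≤ t * ((M : ℝ) ^ (r - 1) * (M : ℝ) ^ (1 - r)) := by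
        gcongr
    _ = t := by rw [← rpow_add hM0]; simp
  set f := fun i : ℕ => min (w * ((i : ℝ) + 1) ^ (-r)) 1
  have hf0 : ∀ i, 0 ≤ f i := fun i => le_min (by positivity) zero_le_one
  calc ∑ i ∈ range n, f i
      ≤ ∑ i ∈ range (M + n), f i :=
        sum_le_sum_of_subset_of_nonneg (range_mono (by omega)) fun i _ _ => hf0 i
    _ = ∑ i ∈ range M, f i + ∑ i ∈ Ico M (M + n), f i := (sum_range_add_sum_Ico _ (by omega)).symm
    _ ≤ ∑ _i ∈ range M, (1 : ℝ) + ∑ i ∈ Ico M (M + n), w * ((i : ℝ) + 1) ^ (-r) := by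
        gcongr with i _ i _ <;> simp [f]
    _ ≤ M + w * ((M : ℝ) ^ (1 - r) / (r - 1)) := by
        rw [← mul_sum]
        gcongr
        · simp
        · exact sum_Ico_add_one_rpow_neg_le hr hM1 _
    _ ≤ (t + 1) + t * (α / (1 - α)) := by
        rw [← mul_div_assoc, div_eq_mul_one_div _ (r - 1),
          show 1 / (r - 1) = α / (1 - α) by rw [hr_def]; field_simp]
        gcongr
    _ ≤ (1 + t) / (1 - α) := by
        have h1α : 0 < 1 - α := by linarith
        rw [le_div_iff₀ h1α, add_mul, mul_assoc t, div_mul_cancel₀ _ h1α.ne']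
        nlinarith

lemma tsum_ofReal_min_mul_add_one_rpow_neg_le {α : ℝ} (hα0 : 0 < α) (hα1 : α < 1) {w : ℝ}
    (hw : 0 ≤ w) :
    ∑' i : ℕ, ENNReal.ofReal (min (w * ((i : ℝ) + 1) ^ (-(1 / α))) 1)
      ≤ ENNReal.ofReal ((1 + w ^ α) / (1 - α)) := by
  refine ENNReal.tsum_le_of_sum_range_le fun n => ?_
  rw [← ENNReal.ofReal_sum_of_nonneg fun i _ => le_min (by positivity) zero_le_one]
  exact ENNReal.ofReal_le_ofReal (sum_range_min_mul_add_one_rpow_neg_le hα0 hα1 hw n)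

lemma summable_of_summable_min_one {ι : Type*} {f : ι → ℝ} (hf : 0 ≤ f)
    (h : Summable fun i => min (f i) 1) : Summable f := by
  refine Summable.of_norm_bounded_eventually h ?_
  filter_upwards [h.tendsto_cofinite_zero.eventually (eventually_lt_nhds one_pos)] with i hi
  rw [Real.norm_of_nonneg (hf i)]
  exact le_min le_rfl (min_lt_iff.1 hi |>.resolve_right (lt_irrefl 1)).le

theorem ae_summable_mul_add_one_rpow_neg {Ω : Type*} [MeasurableSpace Ω] {μ : Measure Ω}
    [IsFiniteMeasure μ] {α : ℝ} (hα0 : 0 < α) (hα1 : α < 1) {Q : ℕ → Ω → ℝ}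
    (hQ_ident : ∀ i, IdentDistrib (Q i) (Q 0) μ μ) (hQ_nonneg : ∀ i, 0 ≤ᵐ[μ] Q i)
    (hQ_moment : Integrable (fun ω => Q 0 ω ^ α) μ) :
    ∀ᵐ ω ∂μ, Summable fun i => Q i ω * ((i : ℝ) + 1) ^ (-(1 / α)) := by
  set F : ℕ → ℝ → ENNReal := fun i x => ENNReal.ofReal (min (x * ((i : ℝ) + 1) ^ (-(1 / α))) 1)
  have hF : ∀ i, Measurable (F i) := fun i => by fun_prop
  have hFQ : ∀ i j, AEMeasurable (fun ω => F i (Q j ω)) μ :=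
    fun i j => (hF i).comp_aemeasurable (hQ_ident j).aemeasurable_fst
  have h_lintegral : ∫⁻ ω, ∑' i, F i (Q i ω) ∂μ ≠ ⊤ := by
    refine (lt_of_le_of_lt ?_ ((((integrable_const 1).add hQ_moment).div_const
      (1 - α)).lintegral_lt_top)).ne
    calc ∫⁻ ω, ∑' i, F i (Q i ω) ∂μ
        = ∑' i, ∫⁻ ω, F i (Q i ω) ∂μ := lintegral_tsum fun i => hFQ i i
      _ = ∑' i, ∫⁻ ω, F i (Q 0 ω) ∂μ :=
        tsum_congr fun i => ((hQ_ident i).comp (hF i)).lintegral_eq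
      _ = ∫⁻ ω, ∑' i, F i (Q 0 ω) ∂μ := (lintegral_tsum fun i => hFQ i 0).symm
      _ ≤ ∫⁻ ω, ENNReal.ofReal ((1 + Q 0 ω ^ α) / (1 - α)) ∂μ := by
        refine lintegral_mono_ae ?_
        filter_upwards [hQ_nonneg 0] with ω hω
        exact tsum_ofReal_min_mul_add_one_rpow_neg_le hα0 hα1 hω
  filter_upwards [ae_lt_top' (AEMeasurable.tsum fun i => hFQ i i) h_lintegral,
    ae_all_iff.2 hQ_nonneg] with ω hω hQ
  have hterm : ∀ i, 0 ≤ Q i ω * ((i : ℝ) + 1) ^ (-(1 / α)) :=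
    fun i => mul_nonneg (hQ i) (by positivity)
  refine summable_of_summable_min_one hterm ?_
  exact (ENNReal.summable_toReal hω.ne).congr fun i =>
    ENNReal.toReal_ofReal (le_min (hterm i) zero_le_one)

lemma ae_pos_gammaMeasure (a r : ℝ) : ∀ᵐ x ∂gammaMeasure a r, 0 < x := by
  rw [gammaMeasure, ae_withDensity_iff (f := gammaPDF a r) (measurable_gammaPDFReal a r).ennreal_ofReal]
  filter_upwards [compl_mem_ae_iff.2 (Real.volume_singleton (a := 0))] with x hx hpdf
  refine lt_of_le_of_ne (not_lt.1 fun hneg => hpdf (gammaPDF_of_neg hneg)) ?_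
  exact fun h => hx h.symm

theorem exists_pos_ae_eventually_mul_le_sum_range {Ω : Type*} [MeasurableSpace Ω]
    {μ : Measure Ω} [IsProbabilityMeasure μ] {X : ℕ → Ω → ℝ}
    (h_indep : Pairwise fun i j => X i ⟂ᵢ[μ] X j) (h_ident : ∀ i, IdentDistrib (X i) (X 0) μ μ)
    (h_pos : ∀ᵐ ω ∂μ, 0 < X 0 ω) :
    ∃ c > 0, ∀ᵐ ω ∂μ, ∀ᶠ n : ℕ in atTop, c * n ≤ ∑ k ∈ range n, X k ω := by
  set Y : ℕ → Ω → ℝ := fun i ω => min (X i ω) 1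
  have hmin : Measurable fun x : ℝ => min x 1 := by fun_prop
  have hY_nonneg : 0 ≤ᵐ[μ] Y 0 := by
    filter_upwards [h_pos] with ω hω using le_min hω.le zero_le_one
  have hY_int : Integrable (Y 0) μ := by
    refine (integrable_const 1).mono' (hmin.comp_aemeasurable
      (h_ident 0).aemeasurable_fst).aestronglyMeasurable ?_
    filter_upwards [hY_nonneg] with ω hω
    rw [Real.norm_of_nonneg hω]
    exact min_le_right _ _
  have hY_mean : 0 < μ[Y 0] := by
    rw [integral_pos_iff_support_of_nonneg_ae hY_nonneg hY_int, pos_iff_ne_zero, Ne,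
      Measure.measure_support_eq_zero_iff μ]
    intro hY_zero
    obtain ⟨ω, hω0, hωpos⟩ := (hY_zero.and h_pos).exists
    exact (lt_min hωpos one_pos).ne' hω0
  have h_slln := strong_law_ae_real Y hY_int
    (fun i j hij => (h_indep hij).comp hmin hmin) fun i => (h_ident i).comp hmin
  refine ⟨μ[Y 0] / 2, by positivity, ?_⟩
  filter_upwards [h_slln] with ω hω
  filter_upwards [hω.eventually (eventually_ge_nhds (half_lt_self hY_mean)),
    eventually_gt_atTop 0] with n hn hn0
  calc μ[Y 0] / 2 * n ≤ ∑ k ∈ range n, Y k ω := (le_div_iff₀ (by positivity)).1 hn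
    _ ≤ ∑ k ∈ range n, X k ω := sum_le_sum fun k _ => min_le_left _ _

lemma summable_mul_rpow_neg_of_mul_le {q s : ℕ → ℝ} {r c : ℝ} (hq : 0 ≤ q) (hr : 0 ≤ r)
    (hc : 0 < c) (hs : ∀ᶠ i : ℕ in atTop, c * ((i : ℝ) + 1) ≤ s i)
    (h : Summable fun i => q i * ((i : ℝ) + 1) ^ (-r)) :
    Summable fun i => q i * s i ^ (-r) := by
  refine Summable.of_norm_bounded_eventually (h.mul_left (c ^ (-r))) ?_
  rw [Nat.cofinite_eq_atTop]
  filter_upwards [hs] with i hi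
  have hci : 0 < c * ((i : ℝ) + 1) := by positivity
  rw [Real.norm_of_nonneg (mul_nonneg (hq i) (rpow_nonneg (hci.le.trans hi) _)),
    mul_left_comm, ← mul_rpow hc.le (by positivity)]
  exact mul_le_mul_of_nonneg_left (rpow_le_rpow_of_nonpos hci hi (by linarith)) (hq i)

theorem lePage_series_converges_ae_general
    {Ω : Type*} [MeasurableSpace Ω] (μ : Measure Ω) [IsProbabilityMeasure μ]
    (μrate α : ℝ) (hα0 : 0 < α) (hα1 : α < 1)
    (gap : ℕ → Ω → ℝ) (Q : ℕ → Ω → ℝ)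
    (hmeas_gap : ∀ i, Measurable (gap i))
    -- gaps and marks are jointly independent
    (h_indep : iIndepFun
      (Sum.elim gap Q) μ)
    -- gaps i.i.d. Exp(μrate): arrival times `τᵢ = Σ_{j≤i} gapⱼ`
    (h_gap_law : ∀ i, Measure.map (gap i) μ = expMeasure μrate)
    -- the `Qᵢ` are i.i.d. nonnegative with finite α-moment
    (h_Q_iid : ∀ i, IdentDistrib (Q i) (Q 0) μ μ)
    (h_Q_nonneg : ∀ i, ∀ᵐ ω ∂μ, 0 ≤ Q i ω)
    (h_Q_moment : Integrable (fun ω => Q 0 ω ^ α) μ) :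
    ∀ᵐ ω ∂μ, Summable fun i =>
      Q i ω * (∑ j ∈ Finset.range (i + 1), gap j ω) ^ (-(1 / α)) := by
  have h_gap_indep : Pairwise fun i j => gap i ⟂ᵢ[μ] gap j := fun i j hij =>
    (h_indep.precomp Sum.inl_injective).indepFun hij
  have h_gap_ident : ∀ i, IdentDistrib (gap i) (gap 0) μ μ := fun i =>
    ⟨(hmeas_gap i).aemeasurable, (hmeas_gap 0).aemeasurable, by rw [h_gap_law, h_gap_law]⟩
  have h_gap_pos : ∀ᵐ ω ∂μ, 0 < gap 0 ω :=
    ae_of_ae_map (hmeas_gap 0).aemeasurable ((h_gap_law 0).symm ▸ ae_pos_gammaMeasure 1 μrate)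
  obtain ⟨c, hc, h_arrival⟩ :=
    exists_pos_ae_eventually_mul_le_sum_range h_gap_indep h_gap_ident h_gap_pos
  filter_upwards [ae_summable_mul_add_one_rpow_neg hα0 hα1 h_Q_iid h_Q_nonneg h_Q_moment,
    h_arrival, ae_all_iff.2 h_Q_nonneg] with ω h_sum h_arr hQ
  refine summable_mul_rpow_neg_of_mul_le hQ (by positivity) hc ?_ h_sum
  filter_upwards [(tendsto_add_atTop_nat 1).eventually h_arr] with i hi
  exact_mod_cast hi

/-- **A.s. convergence of the LePage series.**
Let `{τᵢ}` be the arrival times of a homogeneous Poisson process on `(0,∞)` with rate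
`μrate` (partial sums of i.i.d. `Exp(μrate)` gaps), let `0 < α < 1`, and let `{Qᵢ}` be
i.i.d. nonnegative, independent of the process, with `E[Qᵢ^α] < ∞`.  Then
`A = Σᵢ Qᵢ τᵢ^{-1/α}` converges almost surely. -/
theorem lePage_series_converges_ae
    {Ω : Type*} [MeasurableSpace Ω] (μ : Measure Ω) [IsProbabilityMeasure μ]
    (μrate α : ℝ) (hμrate : 0 < μrate) (hα0 : 0 < α) (hα1 : α < 1)
    (gap : ℕ → Ω → ℝ) (Q : ℕ → Ω → ℝ)
    (hmeas_gap : ∀ i, Measurable (gap i)) (hmeas_Q : ∀ i, Measurable (Q i))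
    -- gaps and marks are jointly independent
    (h_indep : iIndepFun
      (Sum.elim gap Q) μ)
    -- gaps i.i.d. Exp(μrate): arrival times `τᵢ = Σ_{j≤i} gapⱼ`
    (h_gap_law : ∀ i, Measure.map (gap i) μ = expMeasure μrate)
    -- the `Qᵢ` are i.i.d. nonnegative with finite α-moment
    (h_Q_iid : ∀ i, IdentDistrib (Q i) (Q 0) μ μ)
    (h_Q_nonneg : ∀ i, ∀ᵐ ω ∂μ, 0 ≤ Q i ω)
    (h_Q_moment : Integrable (fun ω => Q 0 ω ^ α) μ) :
    ∀ᵐ ω ∂μ, Summable fun i =>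
      Q i ω * (∑ j ∈ Finset.range (i + 1), gap j ω) ^ (-(1 / α)) :=
  lePage_series_converges_ae_general μ μrate α hα0 hα1 gap Q hmeas_gap h_indep h_gap_law h_Q_iid
    h_Q_nonneg h_Q_moment
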